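/- Let K be a field, A a (possibly non-unital) associative K-algebra, and λ ∈ K. Then the bilinear multiplication on the vector space A ⊕ A defined by (x,u)·_M(y,v) = (x·v + u·y, λ(x·y) + u·v) is associative; moreover, the subspace 0 ⊕ A is closed under this multiplication (so (A ⊕_M A, A, A) is a quasi-twilled associative algebra). -/
import Mathlib

/-- The multiplication `(x,u) ·_M (y,v) = (x·v + u·y, λ(x·y) + u·v)` on `A ⊕ A`. -/
def mulM {K : Type*} [Field K] {A : Type*} [AddCommGroup A] [Module K A]
    (m : A →ₗ[K] A →ₗ[K] A) (lam : K) (p q : A × A) : A × A :=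
  (m p.1 q.2 + m p.2 q.1, lam • m p.1 q.1 + m p.2 q.2)

/-- `·_M` is associative and `0 ⊕ A` is closed under it. -/
theorem stmt0 {K : Type*} [Field K] {A : Type*} [AddCommGroup A] [Module K A]
    (m : A →ₗ[K] A →ₗ[K] A)
    (assoc : ∀ x y z : A, m (m x y) z = m x (m y z)) (lam : K) :
    (∀ p q r : A × A,
        mulM m lam (mulM m lam p q) r = mulM m lam p (mulM m lam q r)) ∧
    (∀ u v : A, (mulM m lam ((0 : A), u) ((0 : A), v)).1 = 0) := by
  constructor
  · intro p q r
    simp only [mulM, map_add, map_smul, LinearMap.add_apply, LinearMap.smul_apply, assoc,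
      Prod.mk.injEq, smul_add]
    constructor <;> abel
  · intro u v
    simp [mulM]
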